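/- arXiv:2510.13076 — 7 statements merged into one kernel-verified Lean document; each statement's English description precedes it below -/
import Mathlib

section
/- Let b ≥ 2 and let 𝒜 ⊂ {0,...,b−1} be a set of digits of size b−s containing two consecutive integers n and n+1. Then for every real θ, |∑_{a ∈ 𝒜} e(aθ)| ≤ (b−s)·exp(−‖θ‖²/b). -/
/-!
Two consecutive digits `n, n + 1` contribute `e(nθ)(1 + e(θ))`, of modulus `2|cos πθ|`, which is at
most `2 - 4‖θ‖²` by the quadratic upper bound for the cosine on `[-π, π]`; the triangle inequality
on the remaining digits gives `|𝒜| - 4‖θ‖²`, and `1 - y ≤ exp(-y)` turns this into the exponential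
bound.
-/

open Finset

/-- The standard complex exponential `e(x) = exp(2πix)`. -/
noncomputable def e (x : ℝ) : ℂ := Complex.exp (2 * (Real.pi : ℂ) * Complex.I * (x : ℂ))

/-- Distance from a real number to the nearest integer. -/
noncomputable def nint (x : ℝ) : ℝ := |x - round x|

/-- Fourier transform of the indicator of integers `n < b^N` all of whose
base-`b` digits lie in `A`. -/
noncomputable def Chat (b : ℕ) (A : Finset ℕ) (N : ℕ) (x : ℝ) : ℂ :=
  ∑ n ∈ (Finset.range (b ^ N)).filter (fun n => ∀ i < N, n / b ^ i % b ∈ A), e (n * x)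

/-- The excluded digit set `{0,...,b-1} \ A` is a disjoint union of `k`
(nonempty) intervals of integers. -/
def ExcludedUnionIntervals (b k : ℕ) (A : Finset ℕ) : Prop :=
  ∃ l r : Fin k → ℕ, (∀ i, l i ≤ r i) ∧
    (∀ i j, i ≠ j → Disjoint (Finset.Icc (l i) (r i)) (Finset.Icc (l j) (r j))) ∧
    Finset.range b \ A = Finset.univ.biUnion (fun i => Finset.Icc (l i) (r i))

open Real

lemma norm_e (x : ℝ) : ‖e x‖ = 1 := by
  rw [e, show 2 * (π : ℂ) * Complex.I * x = ((2 * π * x : ℝ) : ℂ) * Complex.I by push_cast; ring]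
  exact Complex.norm_exp_ofReal_mul_I _

lemma e_add (x y : ℝ) : e (x + y) = e x * e y := by
  simp only [e, ← Complex.exp_add]
  push_cast
  ring_nf

lemma norm_one_add_e (x : ℝ) : ‖1 + e x‖ = 2 * |cos (π * x)| := by
  have hfactor : 1 + e x = Complex.exp ((π * x : ℝ) * Complex.I) * (2 * Complex.cos (π * x : ℝ)) := by
    rw [Complex.two_cos, mul_add, ← Complex.exp_add, ← Complex.exp_add, e]
    ring_nf
    rw [Complex.exp_zero]
    push_cast
    ring_nf
  rw [hfactor, norm_mul, Complex.norm_exp_ofReal_mul_I, one_mul, norm_mul, ← Complex.ofReal_cos,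
    Complex.norm_real, Real.norm_eq_abs, Complex.norm_two]

lemma abs_cos_pi_mul_sub_intCast (θ : ℝ) (k : ℤ) : |cos (π * (θ - k))| = |cos (π * θ)| := by
  rw [mul_sub, mul_comm π k, cos_sub_int_mul_pi, abs_mul, abs_neg_one_zpow, one_mul]

lemma cos_pi_mul_le {y : ℝ} (hy : |y| ≤ 1) : cos (π * y) ≤ 1 - 2 * y ^ 2 := by
  have hπy : |π * y| ≤ π := by
    rw [abs_mul, abs_of_pos pi_pos]
    exact mul_le_of_le_one_right pi_pos.le hy
  calc cos (π * y) ≤ 1 - 2 / π ^ 2 * (π * y) ^ 2 := cos_le_one_sub_mul_cos_sq hπy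
    _ = 1 - 2 * y ^ 2 := by field_simp

lemma abs_cos_pi_mul_le (θ : ℝ) : |cos (π * θ)| ≤ 1 - 2 * nint θ ^ 2 := by
  set y := θ - round θ
  have hy : |y| ≤ 1 / 2 := abs_sub_round θ
  have hπy : |π * y| ≤ π / 2 := by
    rw [abs_mul, abs_of_pos pi_pos]
    linarith [mul_le_mul_of_nonneg_left hy pi_pos.le]
  have hcos : 0 ≤ cos (π * y) :=
    cos_nonneg_of_neg_pi_div_two_le_of_le (neg_le_of_abs_le hπy) (le_of_abs_le hπy)
  rw [← abs_cos_pi_mul_sub_intCast θ (round θ), abs_of_nonneg hcos, nint, sq_abs]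
  exact cos_pi_mul_le (hy.trans (by norm_num))

lemma norm_one_add_e_le (θ : ℝ) : ‖1 + e θ‖ ≤ 2 - 4 * nint θ ^ 2 := by
  rw [norm_one_add_e]
  linarith [abs_cos_pi_mul_le θ]

lemma norm_sum_e_le_card_sub {A : Finset ℕ} {n : ℕ} (hn : n ∈ A) (hn1 : n + 1 ∈ A) (θ : ℝ) :
    ‖∑ a ∈ A, e (a * θ)‖ ≤ #A - 4 * nint θ ^ 2 := by
  have hpair : {n, n + 1} ⊆ A := insert_subset hn (singleton_subset_iff.2 hn1)
  have hcard_pair : #{n, n + 1} = 2 := card_pair (by omega)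
  have hsum_pair : ∑ a ∈ {n, n + 1}, e (a * θ) = e (n * θ) * (1 + e θ) := by
    rw [sum_pair (by omega)]
    push_cast
    rw [add_mul, one_mul, e_add, mul_one_add]
  have hrest : ‖∑ a ∈ A \ {n, n + 1}, e (a * θ)‖ ≤ #A - 2 := by
    calc ‖∑ a ∈ A \ {n, n + 1}, e (a * θ)‖ ≤ ∑ a ∈ A \ {n, n + 1}, ‖e (a * θ)‖ := norm_sum_le _ _
      _ = #A - 2 := by
        simp only [norm_e, sum_const, nsmul_eq_mul, mul_one, card_sdiff_of_subset hpair,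
          hcard_pair, Nat.cast_sub (hcard_pair ▸ card_le_card hpair)]
        norm_num
  calc ‖∑ a ∈ A, e (a * θ)‖
      = ‖∑ a ∈ A \ {n, n + 1}, e (a * θ) + e (n * θ) * (1 + e θ)‖ := by
        rw [← hsum_pair, sum_sdiff hpair]
    _ ≤ (#A - 2) + ‖1 + e θ‖ := by
        grw [norm_add_le, hrest, norm_mul, norm_e, one_mul]
    _ ≤ #A - 4 * nint θ ^ 2 := by linarith [norm_one_add_e_le θ]

lemma sub_le_mul_exp_neg_div {C b y : ℝ} (hb : 0 < b) (hC : 0 ≤ C) (hCb : C ≤ b) (hy : 0 ≤ y) :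
    C - y ≤ C * exp (-y / b) := by
  have hCy : C * (y / b) ≤ y := by
    rw [mul_div_assoc', div_le_iff₀ hb]
    exact (mul_le_mul_of_nonneg_right hCb hy).trans_eq (mul_comm b y)
  calc C - y ≤ C * (-y / b + 1) := by rw [neg_div]; linarith
    _ ≤ C * exp (-y / b) := mul_le_mul_of_nonneg_left (add_one_le_exp _) hC

theorem stmt1_general (b s : ℕ) (A : Finset ℕ) (hb : 2 ≤ b) (hs : s ≤ b)
    (hcard : A.card = b - s)
    (n : ℕ) (hn : n ∈ A) (hn1 : n + 1 ∈ A) (θ : ℝ) :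
    ‖∑ a ∈ A, e (a * θ)‖ ≤ ((b : ℝ) - s) * Real.exp (-(nint θ) ^ 2 / b) := by
  have hC : (#A : ℝ) = b - s := by rw [hcard, Nat.cast_sub hs]
  have hb0 : (0 : ℝ) < b := by positivity
  calc ‖∑ a ∈ A, e (a * θ)‖ ≤ #A - 4 * nint θ ^ 2 := norm_sum_e_le_card_sub hn hn1 θ
    _ ≤ (b - s) - nint θ ^ 2 := by rw [hC]; linarith [sq_nonneg (nint θ)]
    _ ≤ (b - s) * exp (-(nint θ) ^ 2 / b) :=
        sub_le_mul_exp_neg_div hb0 (hC ▸ Nat.cast_nonneg _) (by linarith [s.cast_nonneg (α := ℝ)])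
          (sq_nonneg _)

theorem stmt1 (b s : ℕ) (A : Finset ℕ) (hb : 2 ≤ b) (hs : s ≤ b)
    (hA : A ⊆ Finset.range b) (hcard : A.card = b - s)
    (n : ℕ) (hn : n ∈ A) (hn1 : n + 1 ∈ A) (θ : ℝ) :
    ‖∑ a ∈ A, e (a * θ)‖ ≤ ((b : ℝ) - s) * Real.exp (-(nint θ) ^ 2 / b) :=
  stmt1_general b s A hb hs hcard n hn hn1 θ
end

section
/- Let b ≥ 2, let 𝒜 ⊂ {0,...,b−1} with |𝒜| = b−s whose complement is a union of k disjoint integer intervals, and set C₀ := k + 1 + 2(b−s)/(b log b). Then for every real x, ∑_{a=0}^{b^N−1} |Ĉ_{b^N}(x + a/b^N)| ≤ (C₀ b log b)^N. -/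
open Finset

/-! Splitting off the last digit, `n = d + b m`, factors the transform as
`Ĉ_{N+1}(y) = g(y) Ĉ_N(b y)` with `g(y) = ∑_{d ∈ 𝒜} e(d y)`. As `Ĉ_N` is `1`-periodic, the `b^{N+1}`
shifts split into `b^N` blocks of `b` shifts `u + a/b`, and the theorem reduces to the one-digit
estimate `∑_{a<b} |g(u + a/b)| ≤ 2(b - s) + (k + 1) b log b`. There `g` is a full geometric sum
minus `k` interval sums, each of size at most `1/(2‖y‖)` (`‖y‖` the distance to `ℤ`). After moving
`u` into `[0, 1/b)`, the two shifts that may lie near an integer are bounded by `|𝒜|`, and the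
others contribute at most `(k + 1) b/2 · ∑ 1/min(a, b - 1 - a) ≤ (k + 1) b log b`. -/

open Real

lemma e_intCast (m : ℤ) : e m = 1 := by
  rw [e, ← Complex.exp_int_mul_two_pi_mul_I m]
  push_cast
  ring_nf

lemma e_natCast_mul (n : ℕ) (x : ℝ) : e (n * x) = e x ^ n := by
  rw [e, e, ← Complex.exp_nat_mul]
  push_cast
  ring_nf

lemma two_mul_nint_le_abs_sin (x : ℝ) : 2 * nint x ≤ |sin (π * x)| := by
  set r := x - round x
  have hr : |r| ≤ 1 / 2 := abs_sub_round x
  have hsin : |sin (π * x)| = |sin (π * |r|)| := by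
    have hx : π * x = π * r + round x * π := by simp only [r]; ring
    rw [hx, sin_add_int_mul_pi, abs_mul, abs_zpow, abs_neg, abs_one, one_zpow, one_mul]
    rcases abs_cases r with ⟨h, -⟩ | ⟨h, -⟩
    · rw [h]
    · rw [h, mul_neg, sin_neg, abs_neg]
  have hle : 2 / π * (π * |r|) ≤ sin (π * |r|) :=
    mul_le_sin (by positivity) (by nlinarith [pi_pos])
  rw [hsin, nint, abs_of_nonneg (sin_nonneg_of_nonneg_of_le_pi (by positivity)
    (by nlinarith [pi_pos]))]
  calc 2 * |r| = 2 / π * (π * |r|) := by field_simp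
    _ ≤ _ := hle

lemma four_mul_nint_le_norm_e_sub_one (x : ℝ) : 4 * nint x ≤ ‖e x - 1‖ := by
  have h := Complex.norm_exp_I_mul_ofReal_sub_one (2 * π * x)
  rw [show Complex.I * ((2 * π * x : ℝ) : ℂ) = 2 * π * Complex.I * x by push_cast; ring,
    show 2 * π * x / 2 = π * x by ring, norm_mul, Real.norm_ofNat, Real.norm_eq_abs] at h
  rw [e, h]
  linarith [two_mul_nint_le_abs_sin x]

noncomputable def expSum (s : Finset ℕ) (x : ℝ) : ℂ := ∑ n ∈ s, e (n * x)

lemma expSum_periodic (s : Finset ℕ) : Function.Periodic (expSum s) 1 := by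
  intro x
  refine sum_congr rfl fun n _ => ?_
  rw [mul_add, mul_one, e_add, ← Int.cast_natCast, e_intCast, mul_one]

lemma expSum_add_natCast (s : Finset ℕ) (x : ℝ) (n : ℕ) : expSum s (x + n) = expSum s x := by
  simpa using (expSum_periodic s).nat_mul n x

lemma norm_expSum_le_card (s : Finset ℕ) (x : ℝ) : ‖expSum s x‖ ≤ s.card :=
  (norm_sum_le _ _).trans (by simp [norm_e])

lemma norm_expSum_Ico_le (l r : ℕ) {x : ℝ} (hx : 0 < nint x) :
    ‖expSum (Ico l r) x‖ ≤ 1 / (2 * nint x) := by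
  rcases lt_or_ge r l with hrl | hlr
  · simp [expSum, Ico_eq_empty_of_le hrl.le, hx.le]
  have hpos : 0 < ‖e x - 1‖ := by linarith [four_mul_nint_le_norm_e_sub_one x]
  have hne : e x - 1 ≠ 0 := norm_pos_iff.mp hpos
  have hnum : ‖e x ^ r - e x ^ l‖ ≤ 2 := by
    refine (norm_sub_le _ _).trans ?_
    rw [norm_pow, norm_pow, norm_e, one_pow]
    norm_num
  simp only [expSum, e_natCast_mul]
  rw [geom_sum_Ico (sub_ne_zero.mp hne) hlr, norm_div, div_le_div_iff₀ hpos (by positivity)]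
  nlinarith [four_mul_nint_le_norm_e_sub_one x]

lemma norm_expSum_le_of_excludedUnionIntervals {b k : ℕ} {A : Finset ℕ} (hA : A ⊆ range b)
    (hk : ExcludedUnionIntervals b k A) {x : ℝ} (hx : 0 < nint x) :
    ‖expSum A x‖ ≤ (k + 1) / (2 * nint x) := by
  obtain ⟨l, r, -, hdisj, hcompl⟩ := hk
  have hsplit : expSum A x = expSum (range b) x - ∑ i, expSum (Ico (l i) (r i + 1)) x := by
    simp only [expSum, Ico_add_one_right_eq_Icc, ← sum_biUnion (fun i _ j _ hij => hdisj i j hij),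
      ← hcompl, sum_sdiff_eq_sub hA, sub_sub_cancel]
  have hintervals : ‖∑ i, expSum (Ico (l i) (r i + 1)) x‖ ≤ k / (2 * nint x) := by
    refine (norm_sum_le _ _).trans ?_
    calc ∑ i, ‖expSum (Ico (l i) (r i + 1)) x‖ ≤ ∑ _i : Fin k, 1 / (2 * nint x) :=
          sum_le_sum fun i _ => norm_expSum_Ico_le _ _ hx
      _ = k / (2 * nint x) := by rw [sum_const, card_univ, Fintype.card_fin, nsmul_eq_mul]; ring
  calc ‖expSum A x‖ ≤ 1 / (2 * nint x) + k / (2 * nint x) := by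
        rw [hsplit, range_eq_Ico]
        exact (norm_sub_le _ _).trans (add_le_add (norm_expSum_Ico_le _ _ hx) hintervals)
    _ = (k + 1) / (2 * nint x) := by ring

lemma two_mul_le_log_one_add_sub_log_one_sub {x : ℝ} (hx0 : 0 ≤ x) (hx1 : x < 1) :
    2 * x ≤ log (1 + x) - log (1 - x) := by
  have h := le_hasSum (hasSum_log_sub_log_of_abs_lt_one (abs_lt.mpr ⟨by linarith, hx1⟩)) 0
    fun k _ => by positivity
  simpa using h

lemma sum_range_inv_succ_le_log (M : ℕ) :
    ∑ i ∈ range M, 1 / ((i : ℝ) + 1) ≤ log (2 * M + 1) := by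
  induction M with
  | zero => simp
  | succ M ih =>
    have hpos : (0 : ℝ) < 2 * M + 2 := by positivity
    -- `(1 + x) / (1 - x) = (2M + 3) / (2M + 1)` for `x = 1 / (2M + 2)`
    have hstep := two_mul_le_log_one_add_sub_log_one_sub (x := 1 / (2 * M + 2)) (by positivity)
      ((div_lt_one hpos).mpr (by linarith))
    rw [show 1 + 1 / (2 * (M : ℝ) + 2) = (2 * M + 3) / (2 * M + 2) by field_simp; ring,
      show 1 - 1 / (2 * (M : ℝ) + 2) = (2 * M + 1) / (2 * M + 2) by field_simp; ring,
      log_div (by positivity) hpos.ne', log_div (by positivity) hpos.ne'] at hstep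
    rw [sum_range_succ]
    push_cast
    calc _ ≤ log (2 * M + 1) + 2 * (1 / (2 * M + 2)) := by
          rw [show 2 * (1 / (2 * (M : ℝ) + 2)) = 1 / (M + 1) by field_simp]
          linarith
      _ ≤ log (2 * (M + 1) + 1) := by
          rw [show (2 : ℝ) * (M + 1) + 1 = 2 * M + 3 by ring]
          linarith

lemma sum_range_inv_min_le (n : ℕ) :
    ∑ i ∈ range n, 1 / ((min (i + 1) (n - i) : ℕ) : ℝ) ≤ 2 * log (n + 2) := by
  set M := (n + 1) / 2
  set w : ℕ → ℝ := fun j => if j < M then 1 / ((j : ℝ) + 1) else 0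
  have hw : ∀ j, 0 ≤ w j := fun j => by positivity
  -- `1 / min (i + 1) (n - i)` is `w i` or its mirror image `w (n - 1 - i)`
  have hterm : ∀ i ∈ range n, 1 / ((min (i + 1) (n - i) : ℕ) : ℝ) ≤ w i + w (n - 1 - i) := by
    intro i hi
    have hi := mem_range.mp hi
    rcases le_total (i + 1) (n - i) with h | h
    · have hwi : w i = 1 / ((i + 1 : ℕ) : ℝ) := by simp [w, show i < M by omega]
      rw [min_eq_left h, hwi]
      linarith [hw (n - 1 - i)]
    · have hwi : w (n - 1 - i) = 1 / ((n - i : ℕ) : ℝ) := by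
        simp [w, show n - 1 - i < M by omega, show n - i = n - 1 - i + 1 by omega]
      rw [min_eq_right h, hwi]
      linarith [hw i]
  have hsum : ∑ j ∈ range n, w j = ∑ j ∈ range M, 1 / ((j : ℝ) + 1) := by
    rw [sum_ite, sum_const_zero, add_zero]
    congr 1
    ext j
    simp only [mem_filter, mem_range]
    omega
  calc _ ≤ ∑ i ∈ range n, (w i + w (n - 1 - i)) := sum_le_sum hterm
    _ = 2 * ∑ j ∈ range M, 1 / ((j : ℝ) + 1) := by
        rw [sum_add_distrib, sum_range_reflect w n, hsum, two_mul]
    _ ≤ 2 * log (2 * M + 1) := by gcongr; exact sum_range_inv_succ_le_log M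
    _ ≤ 2 * log (n + 2) := by
        gcongr 2 * log ?_
        exact_mod_cast show 2 * M + 1 ≤ n + 2 by omega

section Periodic

variable {M : Type*} [AddCancelCommMonoid M] {F : ℝ → M} {b : ℕ}

lemma Function.Periodic.sum_range_natCast_add_div (hF : Function.Periodic F 1) (hb : 0 < b)
    (t : ℝ) (n : ℕ) : ∑ a ∈ range b, F (t + (n + a) / b) = ∑ a ∈ range b, F (t + a / b) := by
  induction n with
  | zero => simp
  | succ n ih =>
    rw [← ih]
    have hwrap : F (t + (n + b) / b) = F (t + (n + 0) / b) := by
      rw [add_div _ (b : ℝ), div_self (by positivity), ← add_assoc, hF, add_zero]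
    apply add_right_cancel (b := F (t + (n + 0) / b))
    have h := sum_range_succ' (fun a : ℕ => F (t + (n + a) / b)) b
    rw [sum_range_succ, hwrap] at h
    push_cast at h ⊢
    simpa only [add_right_comm (n : ℝ) 1, add_assoc] using h.symm

lemma Function.Periodic.exists_sum_range_add_div_eq (hF : Function.Periodic F 1) (hb : 0 < b)
    (u : ℝ) : ∃ θ : ℝ, 0 ≤ θ ∧ θ < 1 / b ∧
      ∑ a ∈ range b, F (u + a / b) = ∑ a ∈ range b, F (θ + a / b) := by
  have hbR : (0 : ℝ) < b := by exact_mod_cast hb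
  set n := ⌊b * Int.fract u⌋₊
  have hn : (n : ℝ) ≤ b * Int.fract u := Nat.floor_le (by positivity [Int.fract_nonneg u])
  have hn' : b * Int.fract u < n + 1 := Nat.lt_floor_add_one _
  refine ⟨Int.fract u - n / b, ?_, ?_, ?_⟩
  · rw [sub_nonneg, div_le_iff₀ hbR]; linarith
  · rw [sub_lt_iff_lt_add, ← add_div, lt_div_iff₀ hbR]; linarith
  · rw [← hF.sum_range_natCast_add_div hb (Int.fract u - n / b) n]
    refine sum_congr rfl fun a _ => ?_
    rw [← hF.int_mul ⌊u⌋ (Int.fract u - n / b + (n + a) / b)]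
    congr 1
    rw [← Int.self_sub_floor u]
    field_simp
    ring

end Periodic

lemma le_nint_of_le_of_le {x c : ℝ} (h₀ : c ≤ x) (h₁ : c ≤ 1 - x) : c ≤ nint x := by
  rcases le_or_gt (round x) 0 with h | h
  · have : (round x : ℝ) ≤ 0 := by exact_mod_cast h
    exact h₀.trans ((by linarith : x ≤ x - round x).trans (le_abs_self _))
  · have : (1 : ℝ) ≤ round x := by exact_mod_cast h
    exact h₁.trans ((by linarith : 1 - x ≤ -(x - round x)).trans (neg_le_abs _))

lemma min_div_le_nint_add_div {b i : ℕ} {θ : ℝ} (hθ₀ : 0 ≤ θ) (hθ₁ : θ < 1 / b)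
    (hi : i < b - 2) : ((min (i + 1) (b - 2 - i) : ℕ) : ℝ) / b ≤ nint (θ + (i + 1 : ℕ) / b) := by
  have hbR : (0 : ℝ) < b := by exact_mod_cast (show 0 < b by omega)
  have hleft : ((min (i + 1) (b - 2 - i) : ℕ) : ℝ) ≤ (i + 1 : ℕ) := by exact_mod_cast min_le_left _ _
  have hright : ((min (i + 1) (b - 2 - i) : ℕ) : ℝ) + (i + 1 : ℕ) + 1 ≤ b := by
    exact_mod_cast show min (i + 1) (b - 2 - i) + (i + 1) + 1 ≤ b by omega
  apply le_nint_of_le_of_le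
  · have := div_le_div_of_nonneg_right hleft hbR.le
    linarith
  · rw [lt_div_iff₀ hbR] at hθ₁
    rw [div_le_iff₀ hbR, sub_mul, add_mul, div_mul_cancel₀ _ hbR.ne', one_mul]
    linarith

lemma sum_norm_expSum_add_div_le {b k : ℕ} {A : Finset ℕ} (hb : 2 ≤ b) (hA : A ⊆ range b)
    (hk : ExcludedUnionIntervals b k A) (u : ℝ) :
    ∑ a ∈ range b, ‖expSum A (u + a / b)‖ ≤ 2 * A.card + (k + 1) * b * log b := by
  obtain ⟨θ, hθ₀, hθ₁, hshift⟩ :=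
    ((expSum_periodic A).comp norm).exists_sum_range_add_div_eq (by omega : 0 < b) u
  simp only [Function.comp_apply] at hshift
  rw [hshift]
  set f : ℕ → ℝ := fun a => ‖expSum A (θ + a / b)‖
  have hsplit : ∑ a ∈ range b, f a = f 0 + ∑ i ∈ range (b - 2), f (i + 1) + f (b - 1) := by
    obtain ⟨c, rfl⟩ : ∃ c, b = c + 2 := ⟨b - 2, by omega⟩
    rw [sum_range_succ, sum_range_succ', add_comm _ (f 0)]
    rfl
  have hmiddle : ∀ i ∈ range (b - 2),
      f (i + 1) ≤ (k + 1) * b / 2 * (1 / ((min (i + 1) (b - 2 - i) : ℕ) : ℝ)) := by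
    intro i hi
    have hmin := min_div_le_nint_add_div hθ₀ hθ₁ (mem_range.mp hi)
    have hpos : (0 : ℝ) < ((min (i + 1) (b - 2 - i) : ℕ) : ℝ) / b := by
      have : 0 < min (i + 1) (b - 2 - i) := by have := mem_range.mp hi; omega
      positivity
    calc f (i + 1) ≤ (k + 1) / (2 * nint (θ + (i + 1 : ℕ) / b)) :=
          norm_expSum_le_of_excludedUnionIntervals hA hk (hpos.trans_le hmin)
      _ ≤ (k + 1) / (2 * (((min (i + 1) (b - 2 - i) : ℕ) : ℝ) / b)) := by gcongr
      _ = _ := by field_simp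
  have hmiddle_sum : ∑ i ∈ range (b - 2), f (i + 1) ≤ (k + 1) * b * log b := by
    calc _ ≤ ∑ i ∈ range (b - 2), (k + 1) * b / 2 * (1 / ((min (i + 1) (b - 2 - i) : ℕ) : ℝ)) :=
          sum_le_sum hmiddle
      _ ≤ (k + 1) * b / 2 * (2 * log ((b - 2 : ℕ) + 2)) := by
          rw [← mul_sum]; gcongr; exact sum_range_inv_min_le _
      _ = (k + 1) * b * log b := by
          rw [Nat.cast_sub hb]; push_cast; ring_nf
  have hend : ∀ a, f a ≤ A.card := fun a => norm_expSum_le_card A _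
  linarith [hend 0, hend (b - 1)]

lemma sum_range_mul_eq_sum_sum {M : Type*} [AddCommMonoid M] (f : ℕ → M) (m n : ℕ) :
    ∑ a ∈ range (m * n), f a = ∑ i ∈ range m, ∑ j ∈ range n, f (i + m * j) := by
  induction n with
  | zero => simp
  | succ n ih =>
    rw [Nat.mul_succ, sum_range_add, ih]
    simp only [sum_range_succ, sum_add_distrib, add_comm (m * n)]

section Digits

variable {b : ℕ} {A : Finset ℕ}

def digitSet (b : ℕ) (A : Finset ℕ) (N : ℕ) : Finset ℕ :=
  (range (b ^ N)).filter fun n => ∀ i < N, n / b ^ i % b ∈ A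

lemma Chat_eq_expSum (N : ℕ) : Chat b A N = expSum (digitSet b A N) := rfl

lemma mem_digitSet_succ (hb : 0 < b) {N n : ℕ} :
    n ∈ digitSet b A (N + 1) ↔ n % b ∈ A ∧ n / b ∈ digitSet b A N := by
  simp only [digitSet, mem_filter, mem_range, Nat.forall_lt_succ_left, pow_zero, Nat.div_one,
    pow_succ', ← Nat.div_div_eq_div_mul, Nat.div_lt_iff_lt_mul hb, mul_comm (b ^ N) b]
  tauto

lemma Chat_succ (hb : 0 < b) (hA : A ⊆ range b) (N : ℕ) (y : ℝ) :
    Chat b A (N + 1) y = expSum A y * Chat b A N (b * y) := by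
  have hdiv : ∀ d ∈ A, ∀ m, (d + b * m) / b = m := fun d hd m => by
    rw [Nat.add_mul_div_left _ _ hb, Nat.div_eq_of_lt (mem_range.mp (hA hd)), zero_add]
  have hmod : ∀ d ∈ A, ∀ m, (d + b * m) % b = d := fun d hd m => by
    rw [Nat.add_mul_mod_self_left, Nat.mod_eq_of_lt (mem_range.mp (hA hd))]
  simp only [Chat_eq_expSum, expSum, sum_mul_sum, ← sum_product']
  refine sum_nbij' (fun n => (n % b, n / b)) (fun p => p.1 + b * p.2) ?_ ?_ ?_ ?_ ?_
  · intro n hn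
    simpa only [mem_product] using (mem_digitSet_succ hb).mp hn
  · rintro ⟨d, m⟩ hp
    rw [mem_product] at hp
    rw [mem_digitSet_succ hb, hmod d hp.1, hdiv d hp.1]
    exact hp
  · intro n _
    exact Nat.mod_add_div n b
  · rintro ⟨d, m⟩ hp
    rw [mem_product] at hp
    rw [hmod d hp.1, hdiv d hp.1]
  · intro n _
    rw [← e_add]
    congr 1
    conv_lhs => rw [← Nat.mod_add_div n b]
    push_cast
    ring

lemma sum_norm_Chat_succ_le (hb : 0 < b) (hA : A ⊆ range b) {L : ℝ}
    (hL : ∀ u : ℝ, ∑ a ∈ range b, ‖expSum A (u + a / b)‖ ≤ L) (N : ℕ) (x : ℝ) :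
    ∑ a ∈ range (b ^ (N + 1)), ‖Chat b A (N + 1) (x + a / (b : ℝ) ^ (N + 1))‖ ≤
      L * ∑ a ∈ range (b ^ N), ‖Chat b A N (b * x + a / (b : ℝ) ^ N)‖ := by
  rw [pow_succ, sum_range_mul_eq_sum_sum, mul_sum]
  refine sum_le_sum fun a₁ _ => ?_
  set y := x + a₁ / (b : ℝ) ^ (N + 1)
  have hterm : ∀ a₀ : ℕ, ‖Chat b A (N + 1) (x + ((a₁ + b ^ N * a₀ : ℕ) : ℝ) / (b : ℝ) ^ (N + 1))‖
      = ‖expSum A (y + a₀ / b)‖ * ‖Chat b A N (b * x + a₁ / (b : ℝ) ^ N)‖ := fun a₀ => by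
    have harg : x + ((a₁ + b ^ N * a₀ : ℕ) : ℝ) / (b : ℝ) ^ (N + 1) = y + a₀ / b := by
      simp only [y]; push_cast; field_simp; ring
    have hscaled : b * (y + a₀ / b) = (b * x + a₁ / (b : ℝ) ^ N) + a₀ := by
      simp only [y]; field_simp; ring
    rw [harg, Chat_succ hb hA, norm_mul, hscaled, Chat_eq_expSum, expSum_add_natCast]
  simp only [hterm, ← sum_mul]
  exact mul_le_mul_of_nonneg_right (hL y) (norm_nonneg _)

lemma sum_norm_Chat_le_pow (hb : 0 < b) (hA : A ⊆ range b) {L : ℝ}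
    (hL : ∀ u : ℝ, ∑ a ∈ range b, ‖expSum A (u + a / b)‖ ≤ L) (N : ℕ) (x : ℝ) :
    ∑ a ∈ range (b ^ N), ‖Chat b A N (x + a / (b : ℝ) ^ N)‖ ≤ L ^ N := by
  have hL₀ : 0 ≤ L := (sum_nonneg fun _ _ => norm_nonneg _).trans (hL 0)
  induction N generalizing x with
  | zero => simp [Chat_eq_expSum, digitSet, expSum, norm_e]
  | succ N ih =>
    calc _ ≤ L * ∑ a ∈ range (b ^ N), ‖Chat b A N (b * x + a / (b : ℝ) ^ N)‖ :=
          sum_norm_Chat_succ_le hb hA hL N x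
      _ ≤ L * L ^ N := mul_le_mul_of_nonneg_left (ih _) hL₀
      _ = L ^ (N + 1) := (pow_succ' L N).symm

end Digits

theorem stmt4 (b s k N : ℕ) (A : Finset ℕ) (hb : 2 ≤ b) (hs : s ≤ b)
    (hA : A ⊆ Finset.range b) (hcard : A.card = b - s)
    (hk : ExcludedUnionIntervals b k A)
    (C₀ : ℝ) (hC₀ : C₀ = (k : ℝ) + 1 + 2 * ((b : ℝ) - s) / ((b : ℝ) * Real.log b))
    (x : ℝ) :
    ∑ a ∈ Finset.range (b ^ N), ‖Chat b A N (x + (a : ℝ) / (b : ℝ) ^ N)‖ ≤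
      (C₀ * b * Real.log b) ^ N := by
  have hlog : 0 < log b := log_pos (by exact_mod_cast hb)
  have hL : C₀ * b * log b = 2 * A.card + (k + 1) * b * log b := by
    rw [hC₀, hcard, Nat.cast_sub hs]
    field_simp
    ring
  rw [hL]
  exact sum_norm_Chat_le_pow (by omega) hA (sum_norm_expSum_add_div_le hb hA hk) N x
end

section
/- For any real t with ‖b^i t‖ ≥ 1/d for all 0 ≤ i < N (where d ≥ 2), any interval I ⊂ [0, N) of length at least log d / log b contains an index i with ‖b^i t‖ ≥ 1/(2b²). Consequently ∑_{i=0}^{N−1} ‖b^i t‖² ≥ (1/(4b⁴))·⌊N log b / (3 log d)⌋ whenever the hypothesis holds for all i < N. -/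
open Finset

/-! While `‖x‖ < 1/(2b)`, multiplication by `b` multiplies `‖x‖` exactly by `b`. So if `‖x‖ ≥ 1/d`
and all of `‖x‖, ‖bx‖, …, ‖b^(L-1) x‖` stayed below `1/(2b²)`, then `‖b^(L-1) x‖ = b^(L-1) ‖x‖ ≥ 1/b`
as soon as `b^L ≥ d`, a contradiction. Cutting `[0, N)` into `⌊N log b / (3 log d)⌋` disjoint blocks
of length `⌈log d / log b⌉` gives one term `≥ 1/(4b⁴)` per block; when `log b > 3 log d` there are
too few blocks, but then the termwise bound `‖b^i t‖² ≥ 1/d² ≥ 1/b` is already enough. -/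

lemma nint_natCast_mul {n : ℕ} {x : ℝ} (h : n * nint x < 1 / 2) :
    nint (n * x) = n * nint x := by
  have hsmall : |(n : ℝ) * (x - round x)| < 1 / 2 := by
    rwa [abs_mul, Nat.abs_cast]
  have hround : round ((n : ℝ) * x) = n * round x := by
    have hsplit : (n : ℝ) * x = n * (x - round x) + ((n * round x : ℤ) : ℝ) := by push_cast; ring
    rw [hsplit, round_add_intCast, round_eq_zero_iff.mpr ((abs_lt.mp hsmall).imp_left le_of_lt),
      zero_add]
  rw [nint, nint, hround, Int.cast_mul, Int.cast_natCast, ← mul_sub, abs_mul, Nat.abs_cast]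

lemma nint_pow_mul {b k : ℕ} {x : ℝ} (h : ∀ j < k, b * nint (b ^ j * x) < 1 / 2) :
    nint (b ^ k * x) = b ^ k * nint x := by
  induction k with
  | zero => simp
  | succ k ih =>
    rw [pow_succ', mul_assoc, nint_natCast_mul (h k k.lt_succ_self), ih (fun j hj => h j (by omega)),
      ← mul_assoc]

lemma exists_lt_le_nint_pow_mul {b d L : ℕ} (hb : 0 < b) (hd : 0 < d) (hL : 0 < L)
    (hdL : d ≤ b ^ L) {x : ℝ} (hx : 1 / (d : ℝ) ≤ nint x) :
    ∃ j < L, 1 / (2 * (b : ℝ) ^ 2) ≤ nint (b ^ j * x) := by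
  obtain ⟨K, rfl⟩ : ∃ K, L = K + 1 := ⟨L - 1, by omega⟩
  by_contra! hsmall
  have hb1 : (1 : ℝ) ≤ b := by exact_mod_cast hb
  have hgrow : nint (b ^ K * x) = b ^ K * nint x := by
    refine nint_pow_mul fun j hj => ?_
    calc (b : ℝ) * nint (b ^ j * x) < b * (1 / (2 * b ^ 2)) :=
          mul_lt_mul_of_pos_left (hsmall j (by omega)) (by positivity)
      _ ≤ 1 / 2 := by field_simp; exact hb1
  have hdL' : (d : ℝ) ≤ b * b ^ K := by rw [← pow_succ']; exact_mod_cast hdL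
  have hlow : 1 / (b : ℝ) ≤ nint (b ^ K * x) := by
    rw [hgrow]
    calc 1 / (b : ℝ) = b ^ K * (1 / (b * b ^ K)) := by field_simp
      _ ≤ b ^ K * (1 / d) := by gcongr
      _ ≤ b ^ K * nint x := by gcongr
  have hK := hsmall K K.lt_succ_self
  have : 1 / (2 * (b : ℝ) ^ 2) ≤ 1 / b := by
    gcongr; nlinarith
  linarith

lemma pow_ge_of_log_div_log_le {b d L : ℕ} (hb : 2 ≤ b) (hd : 0 < d)
    (hL : Real.log d / Real.log b ≤ L) : d ≤ b ^ L := by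
  have hlogb : 0 < Real.log b := Real.log_pos (by exact_mod_cast hb)
  have : (d : ℝ) ≤ (b : ℝ) ^ L :=
    (Real.le_pow_iff_log_le (by exact_mod_cast hd) (by positivity)).mpr
      ((div_le_iff₀ hlogb).mp hL)
  exact_mod_cast this

lemma mul_le_sum_range_mul {f : ℕ → ℝ} (hf : ∀ i, 0 ≤ f i) {c : ℝ} {L : ℕ} :
    ∀ {m : ℕ}, (∀ j < m, ∃ i, j * L ≤ i ∧ i < j * L + L ∧ c ≤ f i) →
      m * c ≤ ∑ i ∈ range (m * L), f i
  | 0, _ => by simp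
  | m + 1, h => by
    obtain ⟨i, hi₁, hi₂, hci⟩ := h m m.lt_succ_self
    rw [add_one_mul m L, ← sum_range_add_sum_Ico _ (Nat.le_add_right _ _), Nat.cast_succ, add_one_mul]
    gcongr
    · exact mul_le_sum_range_mul hf fun j hj => h j (by omega)
    · exact hci.trans (single_le_sum (fun i _ => hf i) (mem_Ico.mpr ⟨hi₁, hi₂⟩))

lemma ceil_le_three_mul {r : ℝ} (hr : 1 / 3 ≤ r) : (⌈r⌉₊ : ℝ) ≤ 3 * r := by
  rcases le_or_gt r 2⁻¹ with hr2 | hr2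
  · have : ⌈r⌉₊ ≤ 1 := Nat.ceil_le.mpr (by norm_num; linarith)
    have : (⌈r⌉₊ : ℝ) ≤ 1 := by exact_mod_cast this
    linarith
  · linarith [Nat.ceil_lt_two_mul hr2]

lemma floor_div_mul_ceil_le (N : ℕ) {u v : ℝ} (hu : 0 < u) (hv : 0 < v) (hvu : v ≤ 3 * u) :
    ⌊N * v / (3 * u)⌋₊ * ⌈u / v⌉₊ ≤ N := by
  have hceil : (⌈u / v⌉₊ : ℝ) ≤ 3 * (u / v) :=
    ceil_le_three_mul (by rw [le_div_iff₀ hv]; linarith)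
  have hfloor : (⌊N * v / (3 * u)⌋₊ : ℝ) ≤ N * v / (3 * u) := Nat.floor_le (by positivity)
  have : (⌊N * v / (3 * u)⌋₊ * ⌈u / v⌉₊ : ℝ) ≤ N :=
    calc _ ≤ N * v / (3 * u) * (3 * (u / v)) := by gcongr
      _ = N := by field_simp
  exact_mod_cast this

lemma floor_div_le_of_cube_lt {b d : ℕ} (hd : 2 ≤ d) (hdb : 3 * Real.log d < Real.log b) (N : ℕ) :
    1 / (4 * (b : ℝ) ^ 4) * ⌊N * Real.log b / (3 * Real.log d)⌋₊ ≤ N * (1 / (d : ℝ)) ^ 2 := by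
  have hlog2 : Real.log 2 ≤ Real.log d := Real.log_le_log (by norm_num) (by exact_mod_cast hd)
  have hlogd : 1 / 3 ≤ Real.log d := by linarith [Real.log_two_gt_d9]
  have hd3b : (d : ℝ) ^ 3 < b := by
    have hb1 : (1 : ℝ) < b := (Real.log_pos_iff (by positivity)).mp (by linarith)
    rw [← Real.log_lt_log_iff (by positivity) (by linarith), Real.log_pow]; push_cast; linarith
  have hd1 : (1 : ℝ) ≤ d := by exact_mod_cast (by omega : 1 ≤ d)
  have hd2b : (d : ℝ) ^ 2 ≤ b := (pow_le_pow_right₀ hd1 (by norm_num)).trans hd3b.le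
  have hb : (1 : ℝ) ≤ b := (one_le_pow₀ hd1).trans hd2b
  have hm : (⌊N * Real.log b / (3 * Real.log d)⌋₊ : ℝ) ≤ N * b := by
    refine (Nat.floor_le (by positivity)).trans ?_
    rw [div_le_iff₀ (by positivity)]
    calc (N : ℝ) * Real.log b ≤ N * b := by gcongr; exact Real.log_le_self (by positivity)
      _ = N * b * 1 := (mul_one _).symm
      _ ≤ N * b * (3 * Real.log d) := by gcongr; linarith
  calc 1 / (4 * (b : ℝ) ^ 4) * ⌊N * Real.log b / (3 * Real.log d)⌋₊
        ≤ 1 / (4 * b ^ 4) * (N * b) := by gcongr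
    _ ≤ N * (1 / (b : ℝ)) := by
        rw [div_mul_eq_mul_div, one_mul, div_le_iff₀ (by positivity)]
        field_simp
        nlinarith [Nat.cast_nonneg (α := ℝ) N]
    _ ≤ N * (1 / (d : ℝ)) ^ 2 := by
        rw [one_div_pow]; gcongr

lemma exists_Ico_le_nint_of_log_div_log_le {b d N : ℕ} (hb : 2 ≤ b) (hd : 2 ≤ d) {t : ℝ}
    (ht : ∀ i < N, 1 / (d : ℝ) ≤ nint ((b : ℝ) ^ i * t)) {a L : ℕ} (haL : a + L ≤ N)
    (hL : Real.log d / Real.log b ≤ L) :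
    ∃ i, a ≤ i ∧ i < a + L ∧ 1 / (2 * (b : ℝ) ^ 2) ≤ nint ((b : ℝ) ^ i * t) := by
  have hratio : 0 < Real.log d / Real.log b :=
    div_pos (Real.log_pos (by exact_mod_cast hd)) (Real.log_pos (by exact_mod_cast hb))
  have hL0 : 0 < L := by exact_mod_cast hratio.trans_le hL
  obtain ⟨j, hj, hbj⟩ := exists_lt_le_nint_pow_mul (by omega) (by omega) hL0
    (pow_ge_of_log_div_log_le hb (by omega) hL) (ht a (by omega))
  exact ⟨a + j, by omega, by omega, by rwa [pow_add, mul_comm ((b : ℝ) ^ a), mul_assoc]⟩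

theorem stmt6 (b d N : ℕ) (hb : 2 ≤ b) (hd : 2 ≤ d) (t : ℝ)
    (ht : ∀ i < N, 1 / (d : ℝ) ≤ nint ((b : ℝ) ^ i * t)) :
    (∀ a L : ℕ, a + L ≤ N → Real.log d / Real.log b ≤ (L : ℝ) →
      ∃ i, a ≤ i ∧ i < a + L ∧ 1 / (2 * (b : ℝ) ^ 2) ≤ nint ((b : ℝ) ^ i * t)) ∧
    (1 / (4 * (b : ℝ) ^ 4)) * (⌊(N : ℝ) * Real.log b / (3 * Real.log d)⌋₊ : ℝ) ≤
      ∑ i ∈ Finset.range N, nint ((b : ℝ) ^ i * t) ^ 2 := by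
  refine ⟨fun a L => exists_Ico_le_nint_of_log_div_log_le hb hd ht, ?_⟩
  have hsq : ∀ i, 0 ≤ nint ((b : ℝ) ^ i * t) ^ 2 := fun i => sq_nonneg _
  rcases le_or_gt (Real.log b) (3 * Real.log d) with hbd | hbd
  · set m := ⌊(N : ℝ) * Real.log b / (3 * Real.log d)⌋₊
    set L := ⌈Real.log d / Real.log b⌉₊
    have hmL : m * L ≤ N := floor_div_mul_ceil_le N (Real.log_pos (by exact_mod_cast hd))
      (Real.log_pos (by exact_mod_cast hb)) hbd
    have hblock : ∀ j < m, ∃ i, j * L ≤ i ∧ i < j * L + L ∧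
        (1 / (2 * (b : ℝ) ^ 2)) ^ 2 ≤ nint ((b : ℝ) ^ i * t) ^ 2 := fun j hj => by
      have hjL : j * L + L ≤ N := by nlinarith
      obtain ⟨i, hi₁, hi₂, hi⟩ := exists_Ico_le_nint_of_log_div_log_le hb hd ht hjL (Nat.le_ceil _)
      exact ⟨i, hi₁, hi₂, pow_le_pow_left₀ (by positivity) hi 2⟩
    calc 1 / (4 * (b : ℝ) ^ 4) * m = m * (1 / (2 * (b : ℝ) ^ 2)) ^ 2 := by ring
      _ ≤ ∑ i ∈ range (m * L), nint ((b : ℝ) ^ i * t) ^ 2 := mul_le_sum_range_mul hsq hblock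
      _ ≤ ∑ i ∈ range N, nint ((b : ℝ) ^ i * t) ^ 2 :=
        sum_le_sum_of_subset_of_nonneg (range_subset_range.mpr hmL) fun i _ _ => hsq i
  · calc _ ≤ N * (1 / (d : ℝ)) ^ 2 := floor_div_le_of_cube_lt hd hbd N
      _ = ∑ _i ∈ range N, (1 / (d : ℝ)) ^ 2 := by simp
      _ ≤ _ := sum_le_sum fun i hi => pow_le_pow_left₀ (by positivity) (ht i (mem_range.mp hi)) 2
end

section
/- Let b ≥ 4, and let j be a nonzero integer with |j| ≤ b^{m+1}, written as j = ±∑_{c=0}^{m} a_c b^c with digits a_c ∈ {0,...,b−1}. Then for each 0 ≤ i < N with N − i − 1 ≤ m, if the digit a_{N−i−1} ∉ {0, b−1}, then ‖b^{i−N} j‖ ≥ 1/b. -/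
open Finset

/-!
Put `K = N - i`. Modulo `b^K`, `j` is congruent to `±r` with `r = ∑_{c<K} a_c b^c`, so
`‖j / b^K‖ = ‖r / b^K‖`. The leading digit `a_{K-1}` of `r` lies in `[1, b - 2]`, which traps
`r / b^K` in `[1/b, 1 - 1/b]`, at distance at least `1/b` from every integer.
-/

theorem nint_intCast_add (n : ℤ) (x : ℝ) : nint (n + x) = nint x := by
  simp only [nint, round_intCast_add]
  push_cast
  ring_nf

theorem nint_neg (x : ℝ) : nint (-x) = nint x := by
  have key : ∀ y : ℝ, nint (-y) ≤ nint y := fun y => by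
    calc nint (-y) ≤ |-y - ((-round y : ℤ) : ℝ)| := round_le _ _
      _ = nint y := by rw [nint, ← abs_neg]; push_cast; ring_nf
  exact le_antisymm (key x) (by simpa using key (-x))

theorem le_nint_of_le_of_le_one_sub {d x : ℝ} (h₁ : d ≤ x) (h₂ : x ≤ 1 - d) : d ≤ nint x := by
  rw [nint, le_abs]
  rcases le_or_gt (round x) 0 with h | h
  · left
    have : (round x : ℝ) ≤ 0 := by exact_mod_cast h
    linarith
  · right
    have : (1 : ℝ) ≤ round x := by exact_mod_cast h
    linarith

theorem nint_div_eq_of_dvd_sub {j r q : ℤ} (hq : q ≠ 0) (h : q ∣ j - r) :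
    nint (j / q) = nint (r / q) := by
  obtain ⟨t, ht⟩ := h
  have hq' : (q : ℝ) ≠ 0 := by exact_mod_cast hq
  have hj : (j : ℝ) = r + q * t := by exact_mod_cast (by linarith : j = r + q * t)
  rw [show (j : ℝ) / q = t + r / q by rw [hj]; field_simp; ring, nint_intCast_add]

theorem pow_dvd_sum_range_sub_sum_range {R : Type*} [CommRing R] (x : R) (f : ℕ → R) {K M : ℕ}
    (hKM : K ≤ M) : x ^ K ∣ ∑ c ∈ range M, f c * x ^ c - ∑ c ∈ range K, f c * x ^ c := by
  rw [← sum_range_add_sum_Ico _ hKM, add_sub_cancel_left]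
  exact dvd_sum fun c hc => (pow_dvd_pow x (mem_Ico.mp hc).1).mul_left _

section Digits

variable {b : ℕ} {a : ℕ → ℕ}

theorem sum_digits_lt_pow (ha : ∀ c, a c < b) (n : ℕ) : ∑ c ∈ range n, a c * b ^ c < b ^ n := by
  induction n with
  | zero => simp
  | succ n ih =>
    rw [sum_range_succ, pow_succ, mul_comm _ b]
    have := Nat.mul_le_mul_right (b ^ n) (ha n)
    rw [Nat.succ_mul] at this
    omega

theorem pow_le_sum_digits (n : ℕ) (h0 : a n ≠ 0) : b ^ n ≤ ∑ c ∈ range (n + 1), a c * b ^ c := by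
  rw [sum_range_succ]
  exact (Nat.le_mul_of_pos_left _ (Nat.pos_of_ne_zero h0)).trans (Nat.le_add_left _ _)

theorem sum_digits_add_pow_le (ha : ∀ c, a c < b) (n : ℕ) (h1 : a n ≠ b - 1) :
    ∑ c ∈ range (n + 1), a c * b ^ c + b ^ n ≤ b ^ (n + 1) := by
  have hlead : a n + 2 ≤ b := by have := ha n; omega
  have := Nat.mul_le_mul_right (b ^ n) hlead
  rw [Nat.add_mul] at this
  have := sum_digits_lt_pow ha n
  rw [sum_range_succ, pow_succ, mul_comm _ b]
  omega

theorem one_div_le_nint_sum_digits_div (ha : ∀ c, a c < b) (n : ℕ) (h0 : a n ≠ 0)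
    (h1 : a n ≠ b - 1) :
    1 / (b : ℝ) ≤ nint ((∑ c ∈ range (n + 1), (a c : ℝ) * (b : ℝ) ^ c) / (b : ℝ) ^ (n + 1)) := by
  have hb : (0 : ℝ) < b := by exact_mod_cast (Nat.zero_le _).trans_lt (ha 0)
  have hlo : ((b ^ n : ℕ) : ℝ) ≤ ((∑ c ∈ range (n + 1), a c * b ^ c : ℕ) : ℝ) := by
    exact_mod_cast pow_le_sum_digits n h0
  have hhi : ((∑ c ∈ range (n + 1), a c * b ^ c + b ^ n : ℕ) : ℝ) ≤ ((b ^ (n + 1) : ℕ) : ℝ) := by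
    exact_mod_cast sum_digits_add_pow_le ha n h1
  push_cast [pow_succ] at hlo hhi
  have hbn : (0 : ℝ) < (b : ℝ) ^ n := by positivity
  apply le_nint_of_le_of_le_one_sub
  · rw [le_div_iff₀ (by positivity), pow_succ]
    field_simp
    linarith
  · rw [div_le_iff₀ (by positivity), pow_succ]
    field_simp
    linarith

end Digits

theorem stmt8_general (b m N i : ℕ) (a : ℕ → ℕ) (ha : ∀ c, a c < b)
    (j : ℤ) (hjrep : j = ∑ c ∈ Finset.range (m + 1), (a c : ℤ) * (b : ℤ) ^ c ∨
             j = -∑ c ∈ Finset.range (m + 1), (a c : ℤ) * (b : ℤ) ^ c)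
    (hiN : i < N) (hNim : N - i - 1 ≤ m)
    (h0 : a (N - i - 1) ≠ 0) (h1 : a (N - i - 1) ≠ b - 1) :
    1 / (b : ℝ) ≤ nint ((j : ℝ) / (b : ℝ) ^ (N - i)) := by
  set n := N - i - 1
  have hK : N - i = n + 1 := by omega
  have hb : (b : ℤ) ^ (n + 1) ≠ 0 := pow_ne_zero _ (by have := ha 0; omega)
  set S := ∑ c ∈ range (m + 1), (a c : ℤ) * (b : ℤ) ^ c
  have hjS : nint ((j : ℝ) / (b : ℝ) ^ (n + 1)) = nint ((S : ℝ) / (b : ℝ) ^ (n + 1)) := by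
    rcases hjrep with rfl | rfl
    · rfl
    · rw [Int.cast_neg, neg_div, nint_neg]
  have hdvd := pow_dvd_sum_range_sub_sum_range (b : ℤ) (fun c => (a c : ℤ))
    (by omega : n + 1 ≤ m + 1)
  have hlow := nint_div_eq_of_dvd_sub (j := S) hb hdvd
  push_cast at hlow
  rw [hK, hjS, hlow]
  exact one_div_le_nint_sum_digits_div ha n h0 h1

theorem stmt8 (b m N i : ℕ) (hb : 4 ≤ b) (a : ℕ → ℕ) (ha : ∀ c, a c < b)
    (j : ℤ) (hj : j ≠ 0) (hjbound : |j| ≤ (b : ℤ) ^ (m + 1))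
    (hjrep : j = ∑ c ∈ Finset.range (m + 1), (a c : ℤ) * (b : ℤ) ^ c ∨
             j = -∑ c ∈ Finset.range (m + 1), (a c : ℤ) * (b : ℤ) ^ c)
    (hiN : i < N) (hNim : N - i - 1 ≤ m)
    (h0 : a (N - i - 1) ≠ 0) (h1 : a (N - i - 1) ≠ b - 1) :
    1 / (b : ℝ) ≤ nint ((j : ℝ) / (b : ℝ) ^ (N - i)) :=
  stmt8_general b m N i a ha j hjrep hiN hNim h0 h1
end

section
/- Let q = uv with every prime factor of u dividing b and gcd(v, b) = 1, let h satisfy hb ≡ 1 (mod v), let d | bv and ℓ coprime to d. If b^k(a/q + ℓ/d) ∈ ℤ for some k ∈ ℕ, then a ≡ −(bq/d)ℓh (mod v). -/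
/-!
Multiplying `b ^ k (a / q + ℓ / d) = z` by `b q` and writing `b q = d m` gives the integer identity
`b ^ k (b a + ℓ m) = b q z`, whose right side is divisible by `v`. Since `h` inverts `b` modulo `v`,
the factor `b ^ k` cancels, leaving `b a ≡ -ℓ m`, and one more multiplication by `h` gives
`a ≡ -m ℓ h`.
-/

theorem Int.ModEq.modEq_mul_of_mul_modEq {v h b x y : ℤ} (hh : h * b ≡ 1 [ZMOD v])
    (H : b * x ≡ y [ZMOD v]) : x ≡ h * y [ZMOD v] :=
  calc x = 1 * x := (one_mul x).symm
    _ ≡ h * b * x [ZMOD v] := hh.symm.mul_right x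
    _ = h * (b * x) := mul_assoc h b x
    _ ≡ h * y [ZMOD v] := H.mul_left h

theorem pow_mul_add_eq_of_cast_eq {b q d m ℓ a z : ℤ} (k : ℕ) (hq : q ≠ 0) (hd : d ≠ 0)
    (hdm : d * m = b * q)
    (hz : (b : ℚ) ^ k * ((a : ℚ) / (q : ℚ) + (ℓ : ℚ) / (d : ℚ)) = (z : ℚ)) :
    b ^ k * (b * a + ℓ * m) = b * q * z := by
  have hm : (m : ℚ) = b * q / d := by
    rw [eq_div_iff (Int.cast_ne_zero.mpr hd), mul_comm]
    exact_mod_cast hdm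
  have hqQ : (q : ℚ) ≠ 0 := Int.cast_ne_zero.mpr hq
  suffices (b : ℚ) ^ k * (b * a + ℓ * m) = b * q * z by exact_mod_cast this
  rw [hm, ← hz]
  field_simp

theorem stmt12_general (b q u v h d ℓ a : ℤ) (k : ℕ)
    (hu : 0 < u) (hv : 0 < v) (hd : 0 < d)
    (hq : q = u * v)
    (hh : h * b ≡ 1 [ZMOD v])
    (hdbv : d ∣ b * v)
    (hint : ∃ z : ℤ, ((b : ℚ) ^ k) * ((a : ℚ) / (q : ℚ) + (ℓ : ℚ) / (d : ℚ)) = (z : ℚ)) :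
    a ≡ -(b * q / d) * ℓ * h [ZMOD v] := by
  obtain ⟨z, hz⟩ := hint
  have hvq : v ∣ q := hq ▸ dvd_mul_left v u
  have hdm : d * (b * q / d) = b * q :=
    Int.mul_ediv_cancel' (hdbv.trans (mul_dvd_mul_left b hvq))
  have hcleared := pow_mul_add_eq_of_cast_eq k (hq ▸ mul_ne_zero hu.ne' hv.ne') hd.ne' hdm hz
  have hzero : b ^ k * (b * a + ℓ * (b * q / d)) ≡ 0 [ZMOD v] := by
    rw [hcleared, Int.modEq_zero_iff_dvd]
    exact (hvq.mul_left b).mul_right z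
  have hba : b * a ≡ -(ℓ * (b * q / d)) [ZMOD v] := by
    have hsum := Int.ModEq.modEq_mul_of_mul_modEq (by simpa [mul_pow] using hh.pow k) hzero
    simpa using hsum.sub_right (ℓ * (b * q / d))
  calc a ≡ h * -(ℓ * (b * q / d)) [ZMOD v] := Int.ModEq.modEq_mul_of_mul_modEq hh hba
    _ = -(b * q / d) * ℓ * h := by ring

theorem stmt12 (b q u v h d ℓ a : ℤ) (k : ℕ)
    (hb : 2 ≤ b) (hu : 0 < u) (hv : 0 < v) (hd : 0 < d)
    (hq : q = u * v)
    (hub : ∀ p : ℤ, Prime p → p ∣ u → p ∣ b)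
    (hvb : IsCoprime v b)
    (hh : h * b ≡ 1 [ZMOD v])
    (hdbv : d ∣ b * v)
    (hld : IsCoprime ℓ d)
    (hint : ∃ z : ℤ, ((b : ℚ) ^ k) * ((a : ℚ) / (q : ℚ) + (ℓ : ℚ) / (d : ℚ)) = (z : ℚ)) :
    a ≡ -(b * q / d) * ℓ * h [ZMOD v] :=
  stmt12_general b q u v h d ℓ a k hu hv hd hq hh hdbv hint
end

section
/- Let q = uv with every prime factor of u dividing b and gcd(v, b) = 1, d | bv, ℓ coprime to d, and h with hb ≡ 1 (mod v). If a ≡ −(bq/d)ℓh (mod v) and L is any positive integer with u | b^L, then b^L(a/q + ℓ/d) ∈ ℤ. -/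
/-!
Write `b v = d t` and `1 - h b = v m`. The residue `a₀ = -(b q / d) ℓ h = -u t ℓ h` satisfies
`b (a₀ / q + ℓ / d) = (b ℓ / d) (1 - b h) = ℓ m t`, an integer, and any other `a = a₀ + v k`
only adds `k / u` to `a / q + ℓ / d`, which `b ^ L` clears since `u ∣ b ^ L`.
-/

section Field

variable {K : Type*} [Field K] {u v d b t h m ℓ : K}

theorem mul_neg_div_add_div_eq (hu : u ≠ 0) (hv : v ≠ 0) (hd : d ≠ 0)
    (ht : b * v = d * t) (hm : 1 - h * b = v * m) :
    b * (-(u * t) * ℓ * h / (u * v) + ℓ / d) = ℓ * m * t := by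
  field_simp
  linear_combination ℓ * ht + t * ℓ * d * hm

theorem div_mul_eq_add_div_of_sub_eq {a a₀ k : K} (hu : u ≠ 0) (hv : v ≠ 0)
    (hk : a - a₀ = v * k) : a / (u * v) = a₀ / (u * v) + k / u := by
  field_simp
  linear_combination hk

end Field

theorem Int.ediv_eq_of_mul_eq_mul {b u v d t : ℤ} (hd : d ≠ 0) (ht : b * v = d * t) :
    b * (u * v) / d = u * t :=
  Int.ediv_eq_of_eq_mul_right hd (by linear_combination u * ht)

theorem pow_succ_mul_div_add_div_eq_intCast {b u v d t h m ℓ a k s : ℤ} {L : ℕ}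
    (hu : u ≠ 0) (hv : v ≠ 0) (hd : d ≠ 0) (ht : b * v = d * t) (hm : 1 - h * b = v * m)
    (hk : a - -(u * t) * ℓ * h = v * k) (hs : b ^ (L + 1) = u * s) :
    (b : ℚ) ^ (L + 1) * (a / (u * v) + ℓ / d) = ((b ^ L * (ℓ * m * t) + s * k : ℤ) : ℚ) := by
  have hu' : (u : ℚ) ≠ 0 := by exact_mod_cast hu
  have hv' : (v : ℚ) ≠ 0 := by exact_mod_cast hv
  have hd' : (d : ℚ) ≠ 0 := by exact_mod_cast hd
  have htQ : (b : ℚ) * v = d * t := by exact_mod_cast ht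
  have hmQ : 1 - (h : ℚ) * b = v * m := by exact_mod_cast hm
  have hkQ : (a : ℚ) - -(u * t) * ℓ * h = v * k := by exact_mod_cast hk
  have hsQ : (b : ℚ) ^ (L + 1) = u * s := by exact_mod_cast hs
  rw [div_mul_eq_add_div_of_sub_eq hu' hv' hkQ]
  calc (b : ℚ) ^ (L + 1) * (-(u * t) * ℓ * h / (u * v) + k / u + ℓ / d)
      = b ^ L * (b * (-(u * t) * ℓ * h / (u * v) + ℓ / d)) + b ^ (L + 1) * k / u := by ring
    _ = _ := by
      rw [mul_neg_div_add_div_eq hu' hv' hd' htQ hmQ, hsQ, mul_div_right_comm,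
        mul_div_cancel_left₀ _ hu']
      push_cast
      ring

theorem stmt13_general (b q u v h d ℓ a : ℤ) (L : ℕ)
    (hu : 0 < u) (hv : 0 < v) (hd : 0 < d) (hL : 0 < L)
    (hq : q = u * v)
    (hh : h * b ≡ 1 [ZMOD v])
    (hdbv : d ∣ b * v)
    (ha : a ≡ -(b * q / d) * ℓ * h [ZMOD v])
    (huL : u ∣ b ^ L) :
    ∃ z : ℤ, ((b : ℚ) ^ L) * ((a : ℚ) / (q : ℚ) + (ℓ : ℚ) / (d : ℚ)) = (z : ℚ) := by
  obtain ⟨t, ht⟩ := hdbv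
  obtain ⟨m, hm⟩ := hh.dvd
  obtain ⟨k, hk⟩ : v ∣ a - -(u * t) * ℓ * h := by
    rw [← Int.ediv_eq_of_mul_eq_mul hd.ne' ht, ← hq]
    exact ha.symm.dvd
  obtain ⟨L, rfl⟩ : ∃ L', L = L' + 1 := ⟨L - 1, by omega⟩
  obtain ⟨s, hs⟩ := huL
  refine ⟨b ^ L * (ℓ * m * t) + s * k, ?_⟩
  rw [hq, Int.cast_mul]
  exact pow_succ_mul_div_add_div_eq_intCast hu.ne' hv.ne' hd.ne' ht hm hk hs

theorem stmt13 (b q u v h d ℓ a : ℤ) (L : ℕ)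
    (hb : 2 ≤ b) (hu : 0 < u) (hv : 0 < v) (hd : 0 < d) (hL : 0 < L)
    (hq : q = u * v)
    (hub : ∀ p : ℤ, Prime p → p ∣ u → p ∣ b)
    (hvb : IsCoprime v b)
    (hh : h * b ≡ 1 [ZMOD v])
    (hdbv : d ∣ b * v)
    (hld : IsCoprime ℓ d)
    (ha : a ≡ -(b * q / d) * ℓ * h [ZMOD v])
    (huL : u ∣ b ^ L) :
    ∃ z : ℤ, ((b : ℚ) ^ L) * ((a : ℚ) / (q : ℚ) + (ℓ : ℚ) / (d : ℚ)) = (z : ℚ) :=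
  stmt13_general b q u v h d ℓ a L hu hv hd hL hq hh hdbv ha huL
end

section
/- (Brauer–Rademacher identity) For positive integers j and k, ∑_{d | j} (μ(d)/φ(d)) c_d(k) = (j/φ(j)) · 𝟙(gcd(j,k) = 1), where c_d(k) := ∑_{ℓ ∈ (ℤ/dℤ)^×} e(ℓk/d) is Ramanujan's sum. -/
noncomputable def ramanujanSum (d k : ℕ) : ℂ :=
  ∑ ℓ ∈ (Finset.range d).filter (fun ℓ => Nat.Coprime ℓ d),
    e ((ℓ : ℝ) * (k : ℝ) / (d : ℝ))

open ArithmeticFunction Finset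
open scoped ArithmeticFunction.Moebius ArithmeticFunction.zeta

theorem e_natCast_div (m n : ℕ) : e (m / n) = Complex.exp (2 * Real.pi * Complex.I / n) ^ m := by
  rw [e, ← Complex.exp_nat_mul]
  congr 1
  push_cast
  ring

theorem sum_range_e_mul_div {n : ℕ} (hn : n ≠ 0) (k : ℕ) :
    ∑ ℓ ∈ range n, e (ℓ * k / n) = if n ∣ k then (n : ℂ) else 0 := by
  set z := Complex.exp (2 * Real.pi * Complex.I / n)
  have hz : IsPrimitiveRoot z n := Complex.isPrimitiveRoot_exp n hn
  have hterm (ℓ : ℕ) : e (ℓ * k / n) = (z ^ k) ^ ℓ := by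
    rw [← pow_mul, mul_comm, ← e_natCast_div]
    push_cast
    rfl
  simp_rw [hterm]
  split_ifs with hdvd
  · simp [(hz.pow_eq_one_iff_dvd k).2 hdvd]
  · have hne : z ^ k ≠ 1 := mt (hz.pow_eq_one_iff_dvd k).1 hdvd
    rw [geom_sum_eq hne, ← pow_mul, mul_comm, pow_mul, hz.pow_eq_one, one_pow, sub_self, zero_div]

theorem sum_range_mul_filter_dvd {M : Type*} [AddCommMonoid M] (f : ℕ → M) {x : ℕ} (hx : x ≠ 0)
    (n : ℕ) : ∑ ℓ ∈ range (x * n) with x ∣ ℓ, f ℓ = ∑ m ∈ range n, f (x * m) := by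
  have hmul : {ℓ ∈ range (x * n) | x ∣ ℓ} = (range n).map ⟨(x * ·), mul_right_injective₀ hx⟩ := by
    ext ℓ
    simp only [mem_filter, mem_range, mem_map, Function.Embedding.coeFn_mk]
    constructor
    · rintro ⟨hℓ, m, rfl⟩
      exact ⟨m, Nat.lt_of_mul_lt_mul_left hℓ, rfl⟩
    · rintro ⟨m, hm, rfl⟩
      exact ⟨Nat.mul_lt_mul_of_pos_left hm (Nat.pos_of_ne_zero hx), dvd_mul_right x m⟩
  rw [hmul, sum_map]
  rfl

namespace ArithmeticFunction

theorem ite_coprime_eq_sum_moebius {R : Type*} [Ring R] {d : ℕ} (hd : d ≠ 0) (ℓ : ℕ) :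
    (if ℓ.Coprime d then 1 else 0 : R) = ∑ x ∈ d.divisors with x ∣ ℓ, (μ x : R) := by
  have hdiv : {x ∈ d.divisors | x ∣ ℓ} = (ℓ.gcd d).divisors := by
    rw [← Nat.divisors_filter_dvd_of_dvd hd (Nat.gcd_dvd_right ℓ d)]
    refine filter_congr fun x hx => ?_
    rw [Nat.dvd_gcd_iff, and_iff_left (Nat.dvd_of_mem_divisors hx)]
  have hsum := congr($(coe_moebius_mul_coe_zeta (R := R)) (ℓ.gcd d))
  rw [coe_mul_zeta_apply, one_apply] at hsum
  rw [hdiv]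
  simpa [Nat.Coprime] using hsum.symm

def idOn (P : ℕ → Prop) [DecidablePred P] : ArithmeticFunction ℕ :=
  ⟨fun n => if P n then n else 0, by simp⟩

theorem idOn_apply (P : ℕ → Prop) [DecidablePred P] (n : ℕ) : idOn P n = if P n then n else 0 :=
  rfl

theorem isMultiplicative_idOn {P : ℕ → Prop} [DecidablePred P] (h1 : P 1)
    (hmul : ∀ {m n : ℕ}, m.Coprime n → (P (m * n) ↔ P m ∧ P n)) : (idOn P).IsMultiplicative := by
  refine ⟨by simp [idOn_apply, h1], fun {m n} hmn => ?_⟩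
  simp only [idOn_apply, hmul hmn]
  split_ifs <;> simp_all

def totient : ArithmeticFunction ℕ := ⟨Nat.totient, Nat.totient_zero⟩

theorem totient_apply (n : ℕ) : totient n = n.totient := rfl

theorem isMultiplicative_totient : totient.IsMultiplicative :=
  ⟨Nat.totient_one, Nat.totient_mul⟩

theorem coe_moebius_pmul_mul_zeta_apply_prime_pow {R : Type*} [CommRing R]
    (g : ArithmeticFunction R) {p : ℕ} (hp : p.Prime) (a : ℕ) :
    (((μ : ArithmeticFunction R).pmul g) * ζ) (p ^ (a + 1)) = g 1 - g p := by
  rw [coe_mul_zeta_apply, Nat.sum_divisors_prime_pow hp, sum_range_succ', sum_range_succ']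
  have hsq : ∀ i ∈ range a, ((μ : ArithmeticFunction R).pmul g) (p ^ (i + 1 + 1)) = 0 :=
    fun i _ => by simp [moebius_apply_prime_pow hp]
  rw [sum_eq_zero hsq]
  simp [moebius_apply_prime hp]
  ring

noncomputable def ramanujanSumFn (k : ℕ) : ArithmeticFunction ℂ :=
  ⟨(ramanujanSum · k), by simp [ramanujanSum]⟩

theorem ramanujanSumFn_apply (k d : ℕ) : ramanujanSumFn k d = ramanujanSum d k := rfl

theorem ramanujanSumFn_eq_moebius_mul (k : ℕ) :
    ramanujanSumFn k = (μ : ArithmeticFunction ℂ) * idOn (· ∣ k) := by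
  ext d
  rcases eq_or_ne d 0 with rfl | hd
  · simp
  rw [ramanujanSumFn_apply, mul_apply]
  calc ramanujanSum d k
      = ∑ ℓ ∈ range d, ∑ x ∈ d.divisors with x ∣ ℓ, (μ x : ℂ) * e (ℓ * k / d) := by
        rw [ramanujanSum, sum_filter]
        refine sum_congr rfl fun ℓ _ => ?_
        rw [← sum_mul, ← ite_coprime_eq_sum_moebius hd, ite_mul, one_mul, zero_mul]
    _ = ∑ x ∈ d.divisors, (μ x : ℂ) * ∑ ℓ ∈ range d with x ∣ ℓ, e (ℓ * k / d) := by
        simp_rw [mul_sum]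
        exact sum_comm' fun ℓ x => by simp only [mem_filter]; tauto
    _ = ∑ x ∈ d.divisorsAntidiagonal, (μ x.1 : ℂ) * (idOn (· ∣ k) : ArithmeticFunction ℂ) x.2 := by
        rw [Nat.sum_divisorsAntidiagonal
          (fun x n => (μ x : ℂ) * (idOn (· ∣ k) : ArithmeticFunction ℂ) n)]
        refine sum_congr rfl fun x hx => ?_
        obtain ⟨n, rfl⟩ := Nat.dvd_of_mem_divisors hx
        have hx0 : x ≠ 0 := left_ne_zero_of_mul hd
        rw [Nat.mul_div_cancel_left n (Nat.pos_of_ne_zero hx0), sum_range_mul_filter_dvd _ hx0,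
          natCoe_apply, idOn_apply, Nat.cast_ite, Nat.cast_zero,
          ← sum_range_e_mul_div (right_ne_zero_of_mul hd)]
        congr 1
        refine sum_congr rfl fun m _ => congr_arg e ?_
        push_cast
        field_simp
    _ = _ := by simp only [intCoe_apply]

theorem isMultiplicative_ramanujanSumFn (k : ℕ) : (ramanujanSumFn k).IsMultiplicative := by
  rw [ramanujanSumFn_eq_moebius_mul]
  refine isMultiplicative_moebius.intCast.mul
    (isMultiplicative_idOn (one_dvd k) fun hmn => ?_).natCast
  exact ⟨fun h => ⟨dvd_of_mul_right_dvd h, dvd_of_mul_left_dvd h⟩,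
    fun h => hmn.mul_dvd_of_dvd_of_dvd h.1 h.2⟩

end ArithmeticFunction

theorem ramanujanSum_prime {p : ℕ} (hp : p.Prime) (k : ℕ) :
    ramanujanSum p k = (if p ∣ k then (p : ℂ) else 0) - 1 := by
  rw [← ramanujanSumFn_apply, ramanujanSumFn_eq_moebius_mul, mul_apply,
    Nat.sum_divisorsAntidiagonal
      (fun x n => (μ : ArithmeticFunction ℂ) x * (idOn (· ∣ k) : ArithmeticFunction ℂ) n),
    hp.divisors, sum_pair hp.one_lt.ne, Nat.div_one, Nat.div_self hp.pos]
  simp [idOn_apply, moebius_apply_prime hp]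
  ring

theorem moebius_pmul_ramanujanSumFn_pdiv_totient_mul_zeta (k : ℕ) :
    ((μ : ArithmeticFunction ℂ).pmul ((ramanujanSumFn k).pdiv totient)) * ζ =
      (idOn (·.gcd k = 1) : ArithmeticFunction ℂ).pdiv totient := by
  have htot := isMultiplicative_totient.natCast (R := ℂ)
  have hg := (isMultiplicative_ramanujanSumFn k).pdiv htot
  have hlhs := (isMultiplicative_moebius.intCast.pmul hg).mul isMultiplicative_zeta.natCast
  have hrhs := (isMultiplicative_idOn (P := (·.gcd k = 1)) (Nat.gcd_one_left k)
    fun _ => Nat.coprime_mul_iff_left).natCast.pdiv htot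
  refine (IsMultiplicative.eq_iff_eq_on_prime_powers _ hlhs _ hrhs).2 fun p a hp => ?_
  cases a with
  | zero => rw [pow_zero, hlhs.map_one, hrhs.map_one]
  | succ a =>
    have hcop : (p ^ (a + 1)).gcd k = 1 ↔ ¬ p ∣ k :=
      (Nat.coprime_pow_left_iff a.succ_pos p k).trans hp.coprime_iff_not_dvd
    have hp1 : (p : ℂ) - 1 ≠ 0 := sub_ne_zero.2 (by exact_mod_cast hp.one_lt.ne')
    rw [coe_moebius_pmul_mul_zeta_apply_prime_pow _ hp, hg.map_one, pdiv_apply, pdiv_apply,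
      ramanujanSumFn_apply, ramanujanSum_prime hp, natCoe_apply, natCoe_apply, natCoe_apply,
      idOn_apply, totient_apply, totient_apply, Nat.totient_prime hp,
      Nat.totient_prime_pow_succ hp, Nat.cast_mul, Nat.cast_sub hp.one_lt.le]
    by_cases h : p ∣ k
    · rw [if_pos h, if_neg (hcop.not_left.2 h)]
      simp [hp1]
    · rw [if_neg h, if_pos (hcop.2 h)]
      have hp0 : (p : ℂ) ≠ 0 := by exact_mod_cast hp.ne_zero
      push_cast
      field_simp
      ring

theorem stmt14_general (j k : ℕ) :
    ∑ d ∈ j.divisors,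
        ((ArithmeticFunction.moebius d : ℂ) / (Nat.totient d : ℂ)) * ramanujanSum d k =
      ((j : ℂ) / (Nat.totient j : ℂ)) * (if Nat.gcd j k = 1 then 1 else 0) := by
  have h := congr($(moebius_pmul_ramanujanSumFn_pdiv_totient_mul_zeta k) j)
  rw [coe_mul_zeta_apply, pdiv_apply, natCoe_apply, natCoe_apply, idOn_apply, totient_apply] at h
  convert h using 1
  · refine sum_congr rfl fun d _ => ?_
    rw [pmul_apply, pdiv_apply, intCoe_apply, ramanujanSumFn_apply, natCoe_apply, totient_apply]
    ring
  · split_ifs <;> simp [div_eq_mul_inv]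

/-- The Brauer–Rademacher identity. -/
theorem stmt14 (j k : ℕ) (hj : 0 < j) (hk : 0 < k) :
    ∑ d ∈ j.divisors,
        ((ArithmeticFunction.moebius d : ℂ) / (Nat.totient d : ℂ)) * ramanujanSum d k =
      ((j : ℂ) / (Nat.totient j : ℂ)) * (if Nat.gcd j k = 1 then 1 else 0) :=
  stmt14_general j k
end
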